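/- arXiv:2208.01310 — 6 statements merged into one kernel-verified Lean document; each statement's English description precedes it below -/
import Mathlib

section
/- Let X be a graph admitting a pair of disjoint automorphisms σ, τ, and let k ∈ N with k ≤ min(ord(σ), ord(τ)). Define u^ρ_{xy} = Σ_{r=1}^{k} δ_{x,σ^r(y)} p_r + Σ_{s=1}^{k} δ_{x,τ^s(y)} q_s − δ_{xy}·1 ∈ M_k(C), where p_r and q_s are the diagonal and 'Fourier' rank-one projections on C^k as for the cyclic group Z/kZ. Then each u^ρ_{xy} is a projection, all rows and columns (u^ρ_{x·})_y and (u^ρ_{·y})_x sum to 1, and u^ρ commutes with the adjacency matrix of X; i.e. (C^k, u^ρ) is a quantum automorphism of X of dimension k. -/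
/-!
Disjointness makes each entry `u x y` a plain orbit sum: if `σ y = y` the `σ`-sum collapses to
`δ_{xy} • 1` and cancels, leaving `∑_{r ∈ S} q_r` over Fourier projections; if `τ y = y` one is
left with diagonal projections. Both families are complete orthogonal families of star
projections (for the Fourier family this is orthogonality of the characters of `ℤ/k`), so every
entry is a projection, and rows and columns sum to `1 + 1 - 1`. Since disjoint permutations
commute, a product `u x₁ y₁ * u x₂ y₂` can only be nonzero if some `σ ^ a * τ ^ b` maps
`(y₁, y₂)` to `(x₁, x₂)`; such a graph automorphism preserves both equality and adjacency.
-/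

noncomputable section

open Matrix

def diagProj (k : ℕ) (i : Fin k) : Matrix (Fin k) (Fin k) ℂ :=
  Matrix.single i i 1

def fourierProj (k : ℕ) (j : Fin k) : Matrix (Fin k) (Fin k) ℂ :=
  Matrix.of fun a b => (k : ℂ)⁻¹ *
    Complex.exp (2 * (Real.pi : ℂ) * Complex.I * (j : ℕ) * (((a : ℤ) - (b : ℤ) : ℤ) : ℂ) / k)

open Complex

structure IsProjPartition {ι R : Type*} [Fintype ι] [Semiring R] [Star R] (p : ι → R) : Prop
    extends CompleteOrthogonalIdempotents p where
  isSelfAdjoint : ∀ i, IsSelfAdjoint (p i)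

theorem Fin.dvd_val_sub_val_iff {k : ℕ} (a b : Fin k) : (k : ℤ) ∣ (a : ℤ) - b ↔ a = b := by
  refine ⟨fun h => ?_, fun h => by simp [h]⟩
  have := Int.eq_zero_of_abs_lt_dvd h (abs_sub_lt_iff.mpr (by omega))
  omega

def fourierRoot (k : ℕ) : ℂ := exp (2 * Real.pi * I / k)

theorem fourierRoot_ne_zero (k : ℕ) : fourierRoot k ≠ 0 := exp_ne_zero _

theorem star_fourierRoot_zpow (k : ℕ) (m : ℤ) :
    star (fourierRoot k ^ m) = fourierRoot k ^ (-m) := by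
  rw [star_zpow₀, _root_.zpow_neg, ← _root_.inv_zpow, fourierRoot, ← exp_neg, Complex.star_def,
    ← exp_conj]
  congr 2
  simp [map_div₀, map_ofNat, neg_div]

theorem sum_fourierRoot_zpow_mul {k : ℕ} (hk : 0 < k) (m : ℤ) :
    ∑ c : Fin k, fourierRoot k ^ (m * c) = if (k : ℤ) ∣ m then (k : ℂ) else 0 := by
  have hζ : IsPrimitiveRoot (fourierRoot k) k := isPrimitiveRoot_exp k hk.ne'
  simp_rw [_root_.zpow_mul, zpow_natCast]
  rw [Fin.sum_univ_eq_sum_range (fun c => (fourierRoot k ^ m) ^ c)]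
  split_ifs with hm
  · simp [(hζ.zpow_eq_one_iff_dvd m).mpr hm]
  · rw [geom_sum_eq fun h => hm ((hζ.zpow_eq_one_iff_dvd m).mp h), ← zpow_natCast,
      ← _root_.zpow_mul, mul_comm, _root_.zpow_mul, zpow_natCast, hζ.pow_eq_one, _root_.one_zpow,
      sub_self, zero_div]

theorem fourierProj_apply (k : ℕ) (j a b : Fin k) :
    fourierProj k j a b = (k : ℂ)⁻¹ * fourierRoot k ^ ((j : ℤ) * (a - b)) := by
  rw [fourierProj, of_apply, fourierRoot, ← exp_int_mul]
  congr 2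
  push_cast
  ring

theorem fourierProj_mul_fourierProj {k : ℕ} (hk : 0 < k) (i j : Fin k) :
    fourierProj k i * fourierProj k j = if i = j then fourierProj k i else 0 := by
  have hk0 : (k : ℂ) ≠ 0 := by exact_mod_cast hk.ne'
  have hterm : ∀ a b c : Fin k, fourierProj k i a c * fourierProj k j c b =
      (k : ℂ)⁻¹ * (k : ℂ)⁻¹ * fourierRoot k ^ ((i : ℤ) * a - j * b) *
        fourierRoot k ^ (((j : ℤ) - i) * c) := by
    intro a b c
    rw [fourierProj_apply, fourierProj_apply, mul_mul_mul_comm,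
      mul_assoc (_ * _) (fourierRoot k ^ _), ← zpow_add₀ (fourierRoot_ne_zero k),
      ← zpow_add₀ (fourierRoot_ne_zero k)]
    ring_nf
  ext a b
  rw [mul_apply, Finset.sum_congr rfl fun c _ => hterm a b c, ← Finset.mul_sum,
    sum_fourierRoot_zpow_mul hk]
  simp only [Fin.dvd_val_sub_val_iff, eq_comm (a := j)]
  split_ifs with hij
  · subst hij
    rw [fourierProj_apply]
    field_simp
    ring_nf
  · simp

theorem sum_fourierProj {k : ℕ} (hk : 0 < k) : ∑ j, fourierProj k j = 1 := by
  ext a b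
  simp only [Matrix.sum_apply, fourierProj_apply, ← Finset.mul_sum]
  simp_rw [mul_comm (_ : ℤ) ((a : ℤ) - b)]
  rw [sum_fourierRoot_zpow_mul hk]
  simp only [Fin.dvd_val_sub_val_iff, one_apply]
  split_ifs <;> simp [show (k : ℂ) ≠ 0 by exact_mod_cast hk.ne']

theorem isProjPartition_fourierProj {k : ℕ} (hk : 0 < k) :
    IsProjPartition (fourierProj k) where
  toCompleteOrthogonalIdempotents := CompleteOrthogonalIdempotents.iff_ortho_complete.mpr
    ⟨fun i j hij => by simp only [fourierProj_mul_fourierProj hk, if_neg hij], sum_fourierProj hk⟩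
  isSelfAdjoint j := by
    ext a b
    rw [star_apply, fourierProj_apply, fourierProj_apply, star_mul', star_fourierRoot_zpow]
    simp only [star_inv₀, star_natCast]
    ring_nf

theorem isProjPartition_diagProj (k : ℕ) : IsProjPartition (diagProj k) where
  toCompleteOrthogonalIdempotents := CompleteOrthogonalIdempotents.iff_ortho_complete.mpr
    ⟨fun i j hij => by simp [diagProj, hij], sum_single_one⟩
  isSelfAdjoint i := by
    rw [IsSelfAdjoint, star_eq_conjTranspose, diagProj, conjTranspose_single, star_one]

theorem OrthogonalIdempotents.sum_mul_sum_of_disjoint {ι R : Type*} [Semiring R] {p : ι → R}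
    (hp : OrthogonalIdempotents p) {s t : Finset ι} (hst : Disjoint s t) :
    (∑ i ∈ s, p i) * (∑ j ∈ t, p j) = 0 := by
  rw [Finset.sum_mul]
  exact Finset.sum_eq_zero fun i hi => hp.mul_sum_of_notMem (Finset.disjoint_left.mp hst hi)

theorem IsProjPartition.isStarProjection_sum {ι R : Type*} [Fintype ι] [Semiring R]
    [StarRing R] {p : ι → R} (hp : IsProjPartition p) (s : Finset ι) :
    IsStarProjection (∑ i ∈ s, p i) :=
  ⟨hp.isIdempotentElem_sum, isSelfAdjoint_sum s fun i _ => hp.isSelfAdjoint i⟩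

def SimpleGraph.autSubgroup {V : Type*} (G : SimpleGraph V) : Subgroup (Equiv.Perm V) where
  carrier := {g | ∀ x y, G.Adj (g x) (g y) ↔ G.Adj x y}
  mul_mem' hg hh x y := (hg _ _).trans (hh x y)
  one_mem' _ _ := Iff.rfl
  inv_mem' {g} hg x y := by simpa using (hg (g⁻¹ x) (g⁻¹ y)).symm

theorem SimpleGraph.eq_iff_eq_and_adj_iff_adj_of_mem_autSubgroup {V : Type*}
    {G : SimpleGraph V} {g : Equiv.Perm V} (hg : g ∈ G.autSubgroup) {x₁ x₂ y₁ y₂ : V}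
    (h₁ : x₁ = g y₁) (h₂ : x₂ = g y₂) : (x₁ = x₂ ↔ y₁ = y₂) ∧ (G.Adj x₁ x₂ ↔ G.Adj y₁ y₂) := by
  subst h₁ h₂
  exact ⟨g.injective.eq_iff, hg y₁ y₂⟩

section OrbitSum

variable {V R : Type*} [DecidableEq V] {k : ℕ}

def orbitSum [AddCommMonoid R] (g : Equiv.Perm V) (p : Fin k → R) (x y : V) : R :=
  ∑ r : Fin k, if x = (g ^ ((r : ℕ) + 1)) y then p r else 0

theorem orbitSum_eq_sum_filter [AddCommMonoid R] (g : Equiv.Perm V) (p : Fin k → R) (x y : V) :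
    orbitSum g p x y =
      ∑ r ∈ Finset.univ.filter (fun r : Fin k => x = (g ^ ((r : ℕ) + 1)) y), p r :=
  (Finset.sum_filter _ _).symm

theorem orbitSum_of_apply_eq_self [AddCommMonoid R] [One R] {g : Equiv.Perm V} {p : Fin k → R}
    (hp : ∑ r, p r = 1) {y : V} (hy : g y = y) (x : V) :
    orbitSum g p x y = if x = y then 1 else 0 := by
  simp only [orbitSum, Equiv.Perm.pow_apply_eq_self_of_apply_eq_self hy]
  split_ifs <;> simp [hp]

theorem hasSum_orbitSum_row [AddCommMonoid R] [TopologicalSpace R] [ContinuousAdd R]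
    (g : Equiv.Perm V) (p : Fin k → R) (x : V) : HasSum (fun y => orbitSum g p x y) (∑ r, p r) := by
  refine hasSum_sum fun r _ => ?_
  simp only [← Equiv.Perm.eq_inv_iff_eq (f := g ^ ((r : ℕ) + 1)), eq_comm (a := x)]
  exact hasSum_ite_eq _ _

theorem hasSum_orbitSum_col [AddCommMonoid R] [TopologicalSpace R] [ContinuousAdd R]
    (g : Equiv.Perm V) (p : Fin k → R) (y : V) : HasSum (fun x => orbitSum g p x y) (∑ r, p r) :=
  hasSum_sum fun _ _ => hasSum_ite_eq _ _

theorem IsProjPartition.isStarProjection_orbitSum [Semiring R] [StarRing R] {p : Fin k → R}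
    (hp : IsProjPartition p) (g : Equiv.Perm V) (x y : V) :
    IsStarProjection (orbitSum g p x y) := by
  rw [orbitSum_eq_sum_filter]
  exact hp.isStarProjection_sum _

theorem OrthogonalIdempotents.orbitSum_mul_orbitSum_eq_zero [Semiring R] {p : Fin k → R}
    (hp : OrthogonalIdempotents p) {g : Equiv.Perm V} {x₁ x₂ y₁ y₂ : V}
    (h : ∀ n : ℕ, ¬(x₁ = (g ^ n) y₁ ∧ x₂ = (g ^ n) y₂)) :
    orbitSum g p x₁ y₁ * orbitSum g p x₂ y₂ = 0 := by
  rw [orbitSum_eq_sum_filter, orbitSum_eq_sum_filter]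
  exact hp.sum_mul_sum_of_disjoint (Finset.disjoint_filter.mpr fun r _ h₁ h₂ => h _ ⟨h₁, h₂⟩)

theorem orbitSum_mul_orbitSum_eq_zero [NonUnitalNonAssocSemiring R] {g h : Equiv.Perm V}
    {p q : Fin k → R} {x₁ x₂ y₁ y₂ : V}
    (hgh : ∀ a b : ℕ, ¬(x₁ = (g ^ a) y₁ ∧ x₂ = (h ^ b) y₂)) :
    orbitSum g p x₁ y₁ * orbitSum h q x₂ y₂ = 0 := by
  by_cases ha : ∃ r : Fin k, x₁ = (g ^ ((r : ℕ) + 1)) y₁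
  · obtain ⟨r, hr⟩ := ha
    rw [orbitSum, orbitSum, Finset.sum_eq_zero fun s _ => if_neg fun hs => hgh _ _ ⟨hr, hs⟩,
      mul_zero]
  · simp only [not_exists] at ha
    rw [orbitSum, Finset.sum_eq_zero fun r _ => if_neg (ha r), zero_mul]

end OrbitSum

section OrbitSumPair

variable {V R : Type*} [DecidableEq V] [Ring R] {k : ℕ} {σ τ : Equiv.Perm V} {p q : Fin k → R}

def orbitSumPair (σ τ : Equiv.Perm V) (p q : Fin k → R) (x y : V) : R :=
  orbitSum σ p x y + orbitSum τ q x y - if x = y then 1 else 0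

theorem orbitSumPair_of_apply_eq_self_left (hp : ∑ r, p r = 1) {y : V} (hy : σ y = y) (x : V) :
    orbitSumPair σ τ p q x y = orbitSum τ q x y := by
  rw [orbitSumPair, orbitSum_of_apply_eq_self hp hy, add_sub_cancel_left]

theorem orbitSumPair_of_apply_eq_self_right (hq : ∑ r, q r = 1) {y : V} (hy : τ y = y) (x : V) :
    orbitSumPair σ τ p q x y = orbitSum σ p x y := by
  rw [orbitSumPair, orbitSum_of_apply_eq_self hq hy, add_sub_cancel_right]

section Topology

variable [TopologicalSpace R] [IsTopologicalAddGroup R]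

theorem hasSum_orbitSumPair_row (hp : ∑ r, p r = 1) (hq : ∑ r, q r = 1) (x : V) :
    HasSum (fun y => orbitSumPair σ τ p q x y) 1 := by
  have h := ((hasSum_orbitSum_row σ p x).add (hasSum_orbitSum_row τ q x)).sub
    (hasSum_ite_eq' x (1 : R))
  rwa [hp, hq, add_sub_cancel_right] at h

theorem hasSum_orbitSumPair_col (hp : ∑ r, p r = 1) (hq : ∑ r, q r = 1) (y : V) :
    HasSum (fun x => orbitSumPair σ τ p q x y) 1 := by
  have h := ((hasSum_orbitSum_col σ p y).add (hasSum_orbitSum_col τ q y)).sub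
    (hasSum_ite_eq y (1 : R))
  rwa [hp, hq, add_sub_cancel_right] at h

end Topology

theorem IsProjPartition.isStarProjection_orbitSumPair [StarRing R] (hd : σ.Disjoint τ)
    (hp : IsProjPartition p) (hq : IsProjPartition q) (x y : V) :
    IsStarProjection (orbitSumPair σ τ p q x y) := by
  rcases hd y with hy | hy
  · rw [orbitSumPair_of_apply_eq_self_left hp.complete hy]
    exact hq.isStarProjection_orbitSum τ x y
  · rw [orbitSumPair_of_apply_eq_self_right hq.complete hy]
    exact hp.isStarProjection_orbitSum σ x y

theorem orbitSumPair_mul_orbitSumPair_eq_zero (hd : σ.Disjoint τ)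
    (hp : CompleteOrthogonalIdempotents p) (hq : CompleteOrthogonalIdempotents q)
    {x₁ x₂ y₁ y₂ : V} (h : ∀ a b : ℕ, ¬(x₁ = (σ ^ a * τ ^ b) y₁ ∧ x₂ = (σ ^ a * τ ^ b) y₂)) :
    orbitSumPair σ τ p q x₁ y₁ * orbitSumPair σ τ p q x₂ y₂ = 0 := by
  have hσ {y : V} (hy : τ y = y) (a b : ℕ) : (σ ^ a * τ ^ b) y = (σ ^ a) y := by
    rw [Equiv.Perm.mul_apply, Equiv.Perm.pow_apply_eq_self_of_apply_eq_self hy]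
  have hτ {y : V} (hy : σ y = y) (a b : ℕ) : (σ ^ a * τ ^ b) y = (τ ^ b) y := by
    rw [(hd.commute.pow_pow a b).eq, Equiv.Perm.mul_apply,
      Equiv.Perm.pow_apply_eq_self_of_apply_eq_self hy]
  rcases hd y₁ with h₁ | h₁ <;> rcases hd y₂ with h₂ | h₂
  · rw [orbitSumPair_of_apply_eq_self_left hp.complete h₁,
      orbitSumPair_of_apply_eq_self_left hp.complete h₂]
    exact hq.orbitSum_mul_orbitSum_eq_zero fun n hn => h 0 n (by rwa [hτ h₁, hτ h₂])
  · rw [orbitSumPair_of_apply_eq_self_left hp.complete h₁,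
      orbitSumPair_of_apply_eq_self_right hq.complete h₂]
    exact orbitSum_mul_orbitSum_eq_zero fun b a hab => h a b (by rwa [hτ h₁, hσ h₂])
  · rw [orbitSumPair_of_apply_eq_self_right hq.complete h₁,
      orbitSumPair_of_apply_eq_self_left hp.complete h₂]
    exact orbitSum_mul_orbitSum_eq_zero fun a b hab => h a b (by rwa [hσ h₁, hτ h₂])
  · rw [orbitSumPair_of_apply_eq_self_right hq.complete h₁,
      orbitSumPair_of_apply_eq_self_right hq.complete h₂]
    exact hp.orbitSum_mul_orbitSum_eq_zero fun n hn => h n 0 (by rwa [hσ h₁, hσ h₂])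

end OrbitSumPair

theorem stmt6_general {V : Type*} [DecidableEq V] (G : SimpleGraph V) (k : ℕ) (hk : 0 < k)
    (σ τ : Equiv.Perm V)
    (hσadj : ∀ x y, G.Adj (σ x) (σ y) ↔ G.Adj x y)
    (hτadj : ∀ x y, G.Adj (τ x) (τ y) ↔ G.Adj x y)
    (hdisj : ∀ x, (σ x ≠ x → τ x = x) ∧ (τ x ≠ x → σ x = x))
    (u : V → V → Matrix (Fin k) (Fin k) ℂ)
    (hu : ∀ x y, u x y =
      (∑ r : Fin k, if x = (σ ^ ((r : ℕ) + 1)) y then diagProj k r else 0) +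
      (∑ s : Fin k, if x = (τ ^ ((s : ℕ) + 1)) y then fourierProj k s else 0) -
      (if x = y then 1 else 0)) :
    (∀ x y, (u x y).IsHermitian ∧ u x y * u x y = u x y) ∧
    (∀ x z z', z ≠ z' → u x z * u x z' = 0) ∧
    (∀ y z z', z ≠ z' → u z y * u z' y = 0) ∧
    (∀ x, HasSum (fun y => u x y) 1) ∧
    (∀ y, HasSum (fun x => u x y) 1) ∧
    (∀ x₁ x₂ y₁ y₂, ¬((x₁ = x₂ ↔ y₁ = y₂) ∧ (G.Adj x₁ x₂ ↔ G.Adj y₁ y₂)) →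
      u x₁ y₁ * u x₂ y₂ = 0) := by
  obtain rfl : u = orbitSumPair σ τ (diagProj k) (fourierProj k) := funext₂ hu
  have hd : σ.Disjoint τ := fun x => (em (σ x = x)).imp_right (hdisj x).1
  have hP := isProjPartition_diagProj k
  have hQ := isProjPartition_fourierProj hk
  have hσ : σ ∈ G.autSubgroup := hσadj
  have hτ : τ ∈ G.autSubgroup := hτadj
  have hmul : ∀ x₁ x₂ y₁ y₂, ¬((x₁ = x₂ ↔ y₁ = y₂) ∧ (G.Adj x₁ x₂ ↔ G.Adj y₁ y₂)) →
      orbitSumPair σ τ (diagProj k) (fourierProj k) x₁ y₁ *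
        orbitSumPair σ τ (diagProj k) (fourierProj k) x₂ y₂ = 0 :=
    fun _ _ _ _ hrel => orbitSumPair_mul_orbitSumPair_eq_zero hd
      hP.toCompleteOrthogonalIdempotents hQ.toCompleteOrthogonalIdempotents fun a b ⟨h₁, h₂⟩ =>
        hrel (SimpleGraph.eq_iff_eq_and_adj_iff_adj_of_mem_autSubgroup
          (mul_mem (pow_mem hσ a) (pow_mem hτ b)) h₁ h₂)
  refine ⟨fun x y => ?_, fun x z z' hz => hmul _ _ _ _ fun h => hz (h.1.mp rfl),
    fun y z z' hz => hmul _ _ _ _ fun h => hz (h.1.mpr rfl),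
    hasSum_orbitSumPair_row hP.complete hQ.complete,
    hasSum_orbitSumPair_col hP.complete hQ.complete, hmul⟩
  have hproj := hP.isStarProjection_orbitSumPair hd hQ x y
  exact ⟨hproj.isSelfAdjoint, hproj.isIdempotentElem⟩

/-- given disjoint automorphisms `σ, τ` of a graph `G`, and
`k ≤ min(ord σ, ord τ)` (expressed by `σ^r ≠ 1, τ^r ≠ 1` for `0 < r < k`), the matrix
`u_{xy} = Σ_{r=1}^k δ_{x,σ^r y} p_r + Σ_{s=1}^k δ_{x,τ^s y} q_s − δ_{xy}·1` with values in
`M_k(ℂ)` is a quantum automorphism of `G` of dimension `k`: all entries are projections,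
rows and columns sum (strongly) to `1` and are pairwise orthogonal, and `u` preserves the
adjacency relation (equivalently commutes with the adjacency matrix). -/
theorem stmt6 {V : Type*} [DecidableEq V] (G : SimpleGraph V) (k : ℕ) (hk : 0 < k)
    (σ τ : Equiv.Perm V)
    (hσadj : ∀ x y, G.Adj (σ x) (σ y) ↔ G.Adj x y)
    (hτadj : ∀ x y, G.Adj (τ x) (τ y) ↔ G.Adj x y)
    (hdisj : ∀ x, (σ x ≠ x → τ x = x) ∧ (τ x ≠ x → σ x = x))
    (hordσ : ∀ r : ℕ, 0 < r → r < k → σ ^ r ≠ 1)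
    (hordτ : ∀ r : ℕ, 0 < r → r < k → τ ^ r ≠ 1)
    (u : V → V → Matrix (Fin k) (Fin k) ℂ)
    (hu : ∀ x y, u x y =
      (∑ r : Fin k, if x = (σ ^ ((r : ℕ) + 1)) y then diagProj k r else 0) +
      (∑ s : Fin k, if x = (τ ^ ((s : ℕ) + 1)) y then fourierProj k s else 0) -
      (if x = y then 1 else 0)) :
    (∀ x y, (u x y).IsHermitian ∧ u x y * u x y = u x y) ∧
    (∀ x z z', z ≠ z' → u x z * u x z' = 0) ∧
    (∀ y z z', z ≠ z' → u z y * u z' y = 0) ∧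
    (∀ x, HasSum (fun y => u x y) 1) ∧
    (∀ y, HasSum (fun x => u x y) 1) ∧
    (∀ x₁ x₂ y₁ y₂, ¬((x₁ = x₂ ↔ y₁ = y₂) ∧ (G.Adj x₁ x₂ ↔ G.Adj y₁ y₂)) →
      u x₁ y₁ * u x₂ y₂ = 0) :=
  stmt6_general G k hk σ τ hσadj hτadj hdisj u hu
end
end

section
/- Let g, h ∈ SO(3) and define π_g(v_{ij}) = g_{ij} t_i ⊗ t_j ∈ M_4(C) and the tensor product representation (π_g ⊠ π_h)(v_{ij}) = Σ_{k=1}^{3} g_{ik} h_{kj} t_i ⊗ t_k ⊗ t_k ⊗ t_j on C^4 ⊗ C^4. Let p_0, p_1, p_2, p_3 be the four rank-one projections on C^4 decomposing π_e (the representation at the identity e ∈ SO(3)) into the characters corresponding to the Klein group elements d_0 = 1, d_1, d_2, d_3 ∈ SO(3). Then for each m the operator 1 ⊗ p_m ⊗ 1 commutes with all (π_g ⊠ π_h)(v_{ij}), and the restriction of π_g ⊠ π_h to the range of 1 ⊗ p_m ⊗ 1 is unitarily equivalent to π_{g d_m h}. Consequently π_g ⊠ π_h ≅ ⊕_{d∈D}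 π_{g d h}. -/
/-!
Taking `i = j = k` in the character relations gives `(t_k ⊗ t_k) p_m = (d_m)_{kk} p_m`. Since `p_m`
and `t_k ⊗ t_k` are hermitian, `p_m` also commutes with `t_k ⊗ t_k`, so `1 ⊗ p_m ⊗ 1` commutes with
every summand `t_i ⊗ (t_k ⊗ t_k) ⊗ t_j` of `(π_g ⊠ π_h)(v_{ij})`. A hermitian idempotent of trace one
is `v vᴴ` for a unit vector `v`, which is then a common eigenvector of the `t_k ⊗ t_k`. The isometry
`a ⊗ b ↦ a ⊗ v ⊗ b` has range `1 ⊗ p_m ⊗ 1` and turns `t_i ⊗ (t_k ⊗ t_k) ⊗ t_j` into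
`(d_m)_{kk} t_i ⊗ t_j`, and `Σ_k g_{ik} (d_m)_{kk} h_{kj} = (g d_m h)_{ij}`.
-/

noncomputable section

open Matrix
open scoped Kronecker

def pauli : Fin 3 → Matrix (Fin 2) (Fin 2) ℂ
  | 0 => !![Complex.I, 0; 0, -Complex.I]
  | 1 => !![0, 1; -1, 0]
  | 2 => !![0, -Complex.I; -Complex.I, 0]

def piRep (g : Matrix (Fin 3) (Fin 3) ℝ) (i j : Fin 3) :
    Matrix (Fin 2 × Fin 2) (Fin 2 × Fin 2) ℂ :=
  ((g i j : ℝ) : ℂ) • (pauli i ⊗ₖ pauli j)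

/-- The Klein four-group `D = {d_0 = 1, d_1, d_2, d_3} ⊂ SO(3)` of diagonal orthogonal
matrices of determinant `1`. -/
def kleinGroup (m : Fin 4) : Matrix (Fin 3) (Fin 3) ℝ :=
  Matrix.diagonal fun j => if (m : ℕ) = 0 ∨ (j : ℕ) + 1 = (m : ℕ) then 1 else -1

/-- The tensor product representation
`(π_g ⊠ π_h)(v_{ij}) = Σ_k g_{ik} h_{kj} t_i ⊗ (t_k ⊗ t_k) ⊗ t_j` on `ℂ⁴ ⊗ ℂ⁴`. -/
def tensorRep (g h : Matrix (Fin 3) (Fin 3) ℝ) (i j : Fin 3) :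
    Matrix ((Fin 2 × (Fin 2 × Fin 2)) × Fin 2) ((Fin 2 × (Fin 2 × Fin 2)) × Fin 2) ℂ :=
  ∑ k : Fin 3, ((g i k * h k j : ℝ) : ℂ) • (pauli i ⊗ₖ (pauli k ⊗ₖ pauli k) ⊗ₖ pauli j)

open scoped ComplexOrder

namespace Matrix

section RankOne

variable {𝕜 n : Type*} [RCLike 𝕜] [Fintype n]

theorem exists_dotProduct_star_self_eq_one_of_ne_zero {u : n → 𝕜} (hu : u ≠ 0) :
    ∃ c : 𝕜, star (c • u) ⬝ᵥ (c • u) = 1 := by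
  have hnorm : star u ⬝ᵥ u = ((∑ i, ‖u i‖ ^ 2 : ℝ) : 𝕜) := by
    simp [dotProduct, RCLike.conj_mul]
  have hpos : (∑ i, ‖u i‖ ^ 2 : ℝ) ≠ 0 := by
    intro h0
    exact hu (dotProduct_star_self_eq_zero.1 (by rw [hnorm, h0, RCLike.ofReal_zero]))
  refine ⟨((√(∑ i, ‖u i‖ ^ 2))⁻¹ : ℝ), ?_⟩
  rw [star_smul, smul_dotProduct, dotProduct_smul, hnorm, smul_eq_mul, smul_eq_mul,
    RCLike.star_def, RCLike.conj_ofReal, ← mul_assoc, ← RCLike.ofReal_mul, ← RCLike.ofReal_mul,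
    ← mul_inv, Real.mul_self_sqrt (by positivity), inv_mul_cancel₀ hpos, RCLike.ofReal_one]

theorem exists_dotProduct_star_self_eq_one_mulVec_eq_self {P : Matrix n n 𝕜} (hPP : P * P = P)
    (hP : P ≠ 0) : ∃ v : n → 𝕜, star v ⬝ᵥ v = 1 ∧ P *ᵥ v = v := by
  obtain ⟨w, hw⟩ : ∃ w, P *ᵥ w ≠ 0 := by
    by_contra! h
    exact hP (ext_iff_mulVec.2 fun w => by rw [h w, zero_mulVec])
  obtain ⟨c, hc⟩ := exists_dotProduct_star_self_eq_one_of_ne_zero hw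
  refine ⟨c • P *ᵥ w, hc, ?_⟩
  rw [mulVec_smul, mulVec_mulVec, hPP]

theorem eq_zero_of_isHermitian_of_mul_self_of_trace_eq_zero {Q : Matrix n n 𝕜}
    (hQ : Q.IsHermitian) (hQQ : Q * Q = Q) (htr : Q.trace = 0) : Q = 0 := by
  rwa [← trace_conjTranspose_mul_self_eq_zero_iff, hQ.eq, hQQ]

theorem IsHermitian.exists_eq_vecMulVec_of_trace_eq_one {P : Matrix n n 𝕜} (hP : P.IsHermitian)
    (hPP : P * P = P) (htr : P.trace = 1) :
    ∃ v : n → 𝕜, star v ⬝ᵥ v = 1 ∧ P = vecMulVec v (star v) := by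
  have hP0 : P ≠ 0 := by rintro rfl; simp at htr
  obtain ⟨v, hv, hPv⟩ := exists_dotProduct_star_self_eq_one_mulVec_eq_self hPP hP0
  have hvP : star v ᵥ* P = star v := by rw [← hP.eq, ← star_mulVec, hPv]
  -- `P - v vᴴ` is again an orthogonal projection, of trace zero.
  refine ⟨v, hv, (sub_eq_zero.1 <| eq_zero_of_isHermitian_of_mul_self_of_trace_eq_zero ?_ ?_ ?_)⟩
  · simp [IsHermitian, conjTranspose_sub, hP.eq, conjTranspose_vecMulVec]
  · rw [sub_mul, mul_sub, mul_sub, hPP, mul_vecMulVec, vecMulVec_mul, vecMulVec_mul_vecMulVec,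
      hPv, hvP, hv, one_smul]
    abel
  · rw [trace_sub, htr, trace_vecMulVec, dotProduct_comm, hv, sub_self]

end RankOne

theorem IsHermitian.mul_eq_smul_of_mul_eq_smul {R n : Type*} [CommSemiring R] [StarRing R]
    [Fintype n] {A P : Matrix n n R} (hA : A.IsHermitian) (hP : P.IsHermitian) {c : R}
    (h : A * P = c • P) : P * A = star c • P := by
  simpa only [conjTranspose_mul, conjTranspose_smul, hA.eq, hP.eq] using congrArg (·ᴴ) h

theorem mulVec_eq_smul_of_mul_eq_smul {R n : Type*} [CommSemiring R] [Fintype n]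
    {A P : Matrix n n R} {c : R} {v : n → R} (h : A * P = c • P) (hv : P *ᵥ v = v) :
    A *ᵥ v = c • v := by
  rw [← hv, mulVec_mulVec, h, smul_mulVec]

section Kronecker

variable {R n : Type*} (α β : Type*) [Fintype α] [Fintype β] [DecidableEq α] [DecidableEq β]

/-- The matrix of `a ⊗ b ↦ a ⊗ v ⊗ b`. -/
def insertMiddle [Semiring R] (v : n → R) : Matrix ((α × n) × β) (α × β) R :=
  of fun x y => (1 : Matrix α α R) x.1.1 y.1 * v x.1.2 * (1 : Matrix β β R) x.2 y.2

variable {α β}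

theorem _root_.Commute.one_kronecker_kronecker_one [CommSemiring R] [Fintype n] {P B : Matrix n n R}
    (h : Commute P B) (A : Matrix α α R) (C : Matrix β β R) :
    Commute ((1 : Matrix α α R) ⊗ₖ P ⊗ₖ (1 : Matrix β β R)) (A ⊗ₖ B ⊗ₖ C) := by
  simp only [Commute, SemiconjBy, ← mul_kronecker_mul, one_mul, mul_one, h.eq]

variable [CommRing R]

theorem conjTranspose_insertMiddle_mul_insertMiddle [StarRing R] [Fintype n] (v : n → R) :
    (insertMiddle α β v)ᴴ * insertMiddle α β v = (star v ⬝ᵥ v) • 1 := by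
  ext ⟨a, b⟩ ⟨a', b'⟩
  by_cases ha : a = a' <;> by_cases hb : b = b' <;>
    simp [insertMiddle, mul_apply, Fintype.sum_prod_type, one_apply, dotProduct, ha, hb, Ne.symm]

theorem insertMiddle_mul_conjTranspose_insertMiddle [StarRing R] (v : n → R) :
    insertMiddle α β v * (insertMiddle α β v)ᴴ =
      (1 : Matrix α α R) ⊗ₖ vecMulVec v (star v) ⊗ₖ (1 : Matrix β β R) := by
  ext ⟨⟨a, c⟩, b⟩ ⟨⟨a', c'⟩, b'⟩
  by_cases ha : a = a' <;> by_cases hb : b = b' <;>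
    simp [insertMiddle, mul_apply, Fintype.sum_prod_type, one_apply, vecMulVec_apply, ha, hb,
      Ne.symm]

theorem kronecker_mul_insertMiddle [Fintype n] {A : Matrix α α R} {B : Matrix n n R}
    {C : Matrix β β R} {v : n → R} {c : R} (hv : B *ᵥ v = c • v) :
    (A ⊗ₖ B ⊗ₖ C) * insertMiddle α β v = c • (insertMiddle α β v * (A ⊗ₖ C)) := by
  ext x y
  have hvx : ∑ k, B x.1.2 k * v k = c * v x.1.2 := congrFun hv x.1.2
  simp only [insertMiddle, one_apply, ite_mul, one_mul, zero_mul, mul_ite, mul_one, mul_zero,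
    mul_apply, kroneckerMap_apply, of_apply, Fintype.sum_prod_type, Finset.sum_ite_eq',
    Finset.mem_univ, ↓reduceIte, Finset.sum_ite_irrel, Finset.sum_const_zero, smul_apply,
    Finset.sum_ite_eq, smul_eq_mul]
  rw [← mul_assoc, ← hvx, Finset.sum_mul]
  exact Finset.sum_congr rfl fun _ _ => by ring

end Kronecker

end Matrix

theorem conjTranspose_pauli (k : Fin 3) : (pauli k)ᴴ = -pauli k := by
  fin_cases k <;> ext i j <;> fin_cases i <;> fin_cases j <;> simp [pauli]

theorem isHermitian_pauli_kronecker_pauli (k : Fin 3) : (pauli k ⊗ₖ pauli k).IsHermitian := by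
  rw [IsHermitian, conjTranspose_kronecker, conjTranspose_pauli]
  ext
  simp only [kroneckerMap_apply, Matrix.neg_apply, neg_mul_neg]

theorem piRep_one_self (k : Fin 3) : piRep 1 k k = pauli k ⊗ₖ pauli k := by
  simp [piRep]

theorem commute_one_kronecker_kronecker_one_tensorRep
    {P : Matrix (Fin 2 × Fin 2) (Fin 2 × Fin 2) ℂ} (hP : ∀ k, Commute P (pauli k ⊗ₖ pauli k))
    (g h : Matrix (Fin 3) (Fin 3) ℝ) (i j : Fin 3) :
    Commute ((1 : Matrix (Fin 2) (Fin 2) ℂ) ⊗ₖ P ⊗ₖ (1 : Matrix (Fin 2) (Fin 2) ℂ))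
      (tensorRep g h i j) :=
  Commute.sum_right _ _ _ fun k _ => ((hP k).one_kronecker_kronecker_one _ _).smul_right _

theorem tensorRep_mul_insertMiddle (g h : Matrix (Fin 3) (Fin 3) ℝ) {ε : Fin 3 → ℝ}
    {v : Fin 2 × Fin 2 → ℂ} (hv : ∀ k, (pauli k ⊗ₖ pauli k) *ᵥ v = (ε k : ℂ) • v) (i j : Fin 3) :
    tensorRep g h i j * insertMiddle (Fin 2) (Fin 2) v =
      insertMiddle (Fin 2) (Fin 2) v * piRep (g * diagonal ε * h) i j := by
  have hentry : (g * diagonal ε * h) i j = ∑ k, g i k * h k j * ε k := by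
    rw [mul_apply]
    simp only [mul_diagonal]
    exact Finset.sum_congr rfl fun _ _ => by ring
  rw [tensorRep, piRep, Matrix.sum_mul, Matrix.mul_smul, hentry, Complex.ofReal_sum,
    Finset.sum_smul]
  refine Finset.sum_congr rfl fun k _ => ?_
  rw [Matrix.smul_mul, kronecker_mul_insertMiddle (hv k), smul_smul, ← Complex.ofReal_mul]

theorem stmt9_general (g h : Matrix (Fin 3) (Fin 3) ℝ)
    (p : Fin 4 → Matrix (Fin 2 × Fin 2) (Fin 2 × Fin 2) ℂ)
    (hherm : ∀ m, (p m).IsHermitian) (hidem : ∀ m, p m * p m = p m)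
    (hrank : ∀ m, (p m).trace = 1)
    (hchar : ∀ m i j, piRep 1 i j * p m = ((kleinGroup m i j : ℝ) : ℂ) • p m) :
    (∀ (m : Fin 4) (i j : Fin 3),
      Commute ((1 : Matrix (Fin 2) (Fin 2) ℂ) ⊗ₖ p m ⊗ₖ (1 : Matrix (Fin 2) (Fin 2) ℂ))
        (tensorRep g h i j)) ∧
    (∀ m : Fin 4, ∃ W : Matrix ((Fin 2 × (Fin 2 × Fin 2)) × Fin 2) (Fin 2 × Fin 2) ℂ,
      Wᴴ * W = 1 ∧
      W * Wᴴ = (1 : Matrix (Fin 2) (Fin 2) ℂ) ⊗ₖ p m ⊗ₖ (1 : Matrix (Fin 2) (Fin 2) ℂ) ∧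
      ∀ i j : Fin 3, tensorRep g h i j * W = W * piRep (g * kleinGroup m * h) i j) := by
  have hA : ∀ m k, (pauli k ⊗ₖ pauli k) * p m = ((kleinGroup m k k : ℝ) : ℂ) • p m :=
    fun m k => by rw [← piRep_one_self, hchar]
  have hcomm : ∀ m k, Commute (p m) (pauli k ⊗ₖ pauli k) := fun m k => by
    rw [Commute, SemiconjBy, (isHermitian_pauli_kronecker_pauli k).mul_eq_smul_of_mul_eq_smul
      (hherm m) (hA m k), hA m k, Complex.star_def, Complex.conj_ofReal]
  refine ⟨fun m => commute_one_kronecker_kronecker_one_tensorRep (hcomm m) g h, fun m => ?_⟩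
  obtain ⟨v, hv, hpv⟩ := (hherm m).exists_eq_vecMulVec_of_trace_eq_one (hidem m) (hrank m)
  have hpv_mulVec : p m *ᵥ v = v := by
    rw [hpv, vecMulVec_mulVec, hv, MulOpposite.op_one, one_smul]
  refine ⟨insertMiddle (Fin 2) (Fin 2) v, ?_, ?_, fun i j => ?_⟩
  · rw [conjTranspose_insertMiddle_mul_insertMiddle, hv, one_smul]
  · rw [insertMiddle_mul_conjTranspose_insertMiddle, hpv]
  · have hdiag : kleinGroup m = diagonal (diag (kleinGroup m)) :=
      (isDiag_diagonal _).diagonal_diag.symm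
    rw [hdiag]
    exact tensorRep_mul_insertMiddle g h
      (fun k => mulVec_eq_smul_of_mul_eq_smul (hA m k) hpv_mulVec) i j

/-- let `p_0, …, p_3` be the four rank-one projections decomposing `π_e` into
the characters given by the Klein group (`π_e(v_{ij}) p_m = (d_m)_{ij} p_m`, `Σ p_m = 1`).
Then each `1 ⊗ p_m ⊗ 1` commutes with all `(π_g ⊠ π_h)(v_{ij})`, and the restriction of
`π_g ⊠ π_h` to the range of `1 ⊗ p_m ⊗ 1` is unitarily equivalent to `π_{g d_m h}`
(witnessed by an isometry `W`).  Consequently `π_g ⊠ π_h ≅ ⊕_{d ∈ D} π_{g d h}`. -/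
theorem stmt9 (g h : Matrix (Fin 3) (Fin 3) ℝ)
    (hg : g * gᵀ = 1) (hgdet : g.det = 1) (hh : h * hᵀ = 1) (hhdet : h.det = 1)
    (p : Fin 4 → Matrix (Fin 2 × Fin 2) (Fin 2 × Fin 2) ℂ)
    (hherm : ∀ m, (p m).IsHermitian) (hidem : ∀ m, p m * p m = p m)
    (hrank : ∀ m, (p m).trace = 1) (hsum : ∑ m : Fin 4, p m = 1)
    (hchar : ∀ m i j, piRep 1 i j * p m = ((kleinGroup m i j : ℝ) : ℂ) • p m) :
    (∀ (m : Fin 4) (i j : Fin 3),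
      Commute ((1 : Matrix (Fin 2) (Fin 2) ℂ) ⊗ₖ p m ⊗ₖ (1 : Matrix (Fin 2) (Fin 2) ℂ))
        (tensorRep g h i j)) ∧
    (∀ m : Fin 4, ∃ W : Matrix ((Fin 2 × (Fin 2 × Fin 2)) × Fin 2) (Fin 2 × Fin 2) ℂ,
      Wᴴ * W = 1 ∧
      W * Wᴴ = (1 : Matrix (Fin 2) (Fin 2) ℂ) ⊗ₖ p m ⊗ₖ (1 : Matrix (Fin 2) (Fin 2) ℂ) ∧
      ∀ i j : Fin 3, tensorRep g h i j * W = W * piRep (g * kleinGroup m * h) i j) :=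
  stmt9_general g h p hherm hidem hrank hchar
end
end

section
/- Let g, h ∈ SO(3) and suppose the representations π_g and π_h of the C*-algebra C(SO_{−1}(3)) (with π_g(v_{ij}) = g_{ij} t_i ⊗ t_j) admit a common irreducible subrepresentation. Then |g_{ij}| = |h_{ij}| for all i,j, and consequently there exist c, d in the Klein group D ⊂ SO(3) with g = c h d. -/
noncomputable section

open Matrix
open scoped Kronecker

/-!
Since `(t_i ⊗ t_j)² = 1`, `π_g(v_ij)² = g_ij² • 1`, and an isometric intertwiner carries this
identity over to the common subrepresentation: `ρ(v_ij)² = g_ij² • 1 = h_ij² • 1`.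

For the signs: a vector in dimension three with zero sum is determined up to a global sign by
the squares of its entries. Column orthogonality makes this apply to entrywise products of two
columns, giving one sign per pair of columns of `g` relative to `h`. These signs come from
column signs `d` (they are consistent as soon as some row has no zero entry, and otherwise
some pair of columns has disjoint supports), and then every row of `g · diag d` is `±` the
corresponding row of `h`. The determinants fix the product of all signs, so after a common
sign change both diagonal factors lie in `D`.
-/

lemma pauli_mul_self (i : Fin 3) : pauli i * pauli i = -1 := by
  fin_cases i <;> ext a b <;> fin_cases a <;> fin_cases b <;> simp [pauli]

lemma piRep_mul_self (g : Matrix (Fin 3) (Fin 3) ℝ) (i j : Fin 3) :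
    piRep g i j * piRep g i j = ((g i j ^ 2 : ℝ) : ℂ) • 1 := by
  rw [piRep, smul_mul_smul_comm, ← mul_kronecker_mul, pauli_mul_self, pauli_mul_self,
    ← neg_one_smul ℂ 1, smul_kronecker, kronecker_smul, one_kronecker_one, smul_smul, smul_smul]
  norm_num [sq]

lemma mul_self_eq_smul_one_of_intertwines {m n R : Type*} [Fintype m] [Fintype n]
    [DecidableEq m] [DecidableEq n] [CommSemiring R] {A : Matrix m m R} {B : Matrix n n R}
    {V : Matrix n m R} {W : Matrix m n R} (hVW : V * W = 1) (hAW : A * W = W * B) {r : R}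
    (hA : A * A = r • 1) : B * B = r • 1 := by
  have hW : W * (B * B) = r • W := by
    rw [← Matrix.mul_assoc, ← hAW, Matrix.mul_assoc, ← hAW, ← Matrix.mul_assoc, hA,
      Matrix.smul_mul, Matrix.one_mul]
  rw [← Matrix.one_mul (B * B), ← hVW, Matrix.mul_assoc, hW, Matrix.mul_smul, hVW]

lemma sq_eq_sq_of_common_subrep {ι : Type*} [Fintype ι] [DecidableEq ι] [Nonempty ι]
    {g h : Matrix (Fin 3) (Fin 3) ℝ} {ρ : Fin 3 → Fin 3 → Matrix ι ι ℂ}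
    {Wg Wh : Matrix (Fin 2 × Fin 2) ι ℂ} (hWg : Wgᴴ * Wg = 1) (hWh : Whᴴ * Wh = 1)
    (hintg : ∀ i j, piRep g i j * Wg = Wg * ρ i j) (hinth : ∀ i j, piRep h i j * Wh = Wh * ρ i j)
    (i j : Fin 3) : g i j ^ 2 = h i j ^ 2 := by
  have hρg := mul_self_eq_smul_one_of_intertwines hWg (hintg i j) (piRep_mul_self g i j)
  have hρh := mul_self_eq_smul_one_of_intertwines hWh (hinth i j) (piRep_mul_self h i j)
  exact_mod_cast smul_left_injective ℂ one_ne_zero (hρg.symm.trans hρh)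

lemma exists_sign_mul_of_mul_eq_mul {ι K : Type*} [Field K] {x y : ι → K}
    (h : ∀ j l, x j * x l = y j * y l) : ∃ s : K, s * s = 1 ∧ ∀ j, x j = s * y j := by
  by_cases hy : ∀ j, y j = 0
  · refine ⟨1, one_mul 1, fun j => ?_⟩
    simpa [hy j] using h j j
  · push Not at hy
    obtain ⟨j₀, hj₀⟩ := hy
    refine ⟨x j₀ / y j₀, ?_, fun j => ?_⟩
    · field_simp
      linear_combination h j₀ j₀
    · field_simp
      refine mul_left_cancel₀ hj₀ ?_
      linear_combination x j₀ * h j₀ j - x j * h j₀ j₀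

lemma mul_eq_mul_of_sum_eq_zero {K : Type*} [Field K] {x y : Fin 3 → K}
    (hx : ∑ i, x i = 0) (hy : ∑ i, y i = 0) (hsq : ∀ i, x i ^ 2 = y i ^ 2) (j l : Fin 3) :
    x j * x l = y j * y l := by
  -- `2 x_j x_l = x_m² - x_j² - x_l²` whenever `{j, l, m} = {0, 1, 2}`
  rw [Fin.sum_univ_three] at hx hy
  have h0 := hsq 0
  have h1 := hsq 1
  have h2 := hsq 2
  fin_cases j <;> fin_cases l <;> grind

lemma exists_sign_mul_of_sum_eq_zero {K : Type*} [Field K] {x y : Fin 3 → K}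
    (hx : ∑ i, x i = 0) (hy : ∑ i, y i = 0) (hsq : ∀ i, x i ^ 2 = y i ^ 2) :
    ∃ s : K, s * s = 1 ∧ ∀ i, x i = s * y i :=
  exists_sign_mul_of_mul_eq_mul (mul_eq_mul_of_sum_eq_zero hx hy hsq)

lemma sum_mul_eq_zero_of_mul_transpose_eq_one {n R : Type*} [Fintype n] [DecidableEq n]
    [CommSemiring R] {g : Matrix n n R} (hg : g * gᵀ = 1) {i k : n} (hik : i ≠ k) :
    ∑ j, g i j * g k j = 0 := by
  simpa [Matrix.mul_apply, Matrix.one_apply, hik] using congrFun (congrFun hg i) k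

lemma sum_mul_eq_zero_of_transpose_mul_eq_one {n R : Type*} [Fintype n] [DecidableEq n]
    [CommRing R] {g : Matrix n n R} (hg : g * gᵀ = 1) {j l : n} (hjl : j ≠ l) :
    ∑ i, g i j * g i l = 0 :=
  sum_mul_eq_zero_of_mul_transpose_eq_one (g := gᵀ)
    (by rw [transpose_transpose]; exact mul_eq_one_comm.mp hg) hjl

section SignPattern

variable {K : Type*} [Field K] {g h : Matrix (Fin 3) (Fin 3) K}

lemma exists_sign_col_mul_eq (hg : g * gᵀ = 1) (hh : h * hᵀ = 1)
    (hsq : ∀ i j, g i j ^ 2 = h i j ^ 2) {j l : Fin 3} (hjl : j ≠ l) :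
    ∃ s : K, s * s = 1 ∧ ∀ i, g i j * g i l = s * (h i j * h i l) :=
  exists_sign_mul_of_sum_eq_zero (sum_mul_eq_zero_of_transpose_mul_eq_one hg hjl)
    (sum_mul_eq_zero_of_transpose_mul_eq_one hh hjl) fun i => by rw [mul_pow, mul_pow, hsq, hsq]

lemma col_mul_eq_zero_of_forall_exists_eq_zero (hg : g * gᵀ = 1) (hz : ∀ i, ∃ j, g i j = 0) :
    (∀ i, g i 0 * g i 1 = 0) ∨ ∀ i, g i 1 * g i 2 = 0 := by
  by_contra! ⟨⟨i, hi⟩, ⟨k, hk⟩⟩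
  have hi2 : g i 2 = 0 := by
    obtain ⟨j, hj⟩ := hz i
    fin_cases j <;> simp_all
  have hk0 : g k 0 = 0 := by
    obtain ⟨j, hj⟩ := hz k
    fin_cases j <;> simp_all
  have hik : i ≠ k := by
    rintro rfl
    simp_all
  have := sum_mul_eq_zero_of_mul_transpose_eq_one hg hik
  simp only [Fin.sum_univ_three, hi2, hk0, mul_zero, zero_mul, add_zero, zero_add] at this
  exact mul_ne_zero (right_ne_zero_of_mul hi) (left_ne_zero_of_mul hk) this

lemma mul_mul_mul_eq_of_pairs (hsq : ∀ i j, g i j ^ 2 = h i j ^ 2) {d : Fin 3 → K}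
    (hd : ∀ j, d j * d j = 1) (h₀₁ : ∀ i, g i 0 * g i 1 * (d 0 * d 1) = h i 0 * h i 1)
    (h₀₂ : ∀ i, g i 0 * g i 2 * (d 0 * d 2) = h i 0 * h i 2)
    (h₁₂ : ∀ i, g i 1 * g i 2 * (d 1 * d 2) = h i 1 * h i 2) (i j l : Fin 3) :
    g i j * g i l * (d j * d l) = h i j * h i l := by
  rcases eq_or_ne j l with rfl | hjl
  · linear_combination g i j ^ 2 * hd j + hsq i j
  fin_cases j <;> fin_cases l <;> simp only [Fin.reduceFinMk, Fin.isValue] at hjl ⊢ <;>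
    first
    | exact absurd rfl hjl
    | linear_combination h₀₁ i
    | linear_combination h₀₂ i
    | linear_combination h₁₂ i

lemma exists_col_signs (hg : g * gᵀ = 1) (hh : h * hᵀ = 1)
    (hsq : ∀ i j, g i j ^ 2 = h i j ^ 2) :
    ∃ d : Fin 3 → K, (∀ j, d j * d j = 1) ∧
      ∀ i j l, g i j * g i l * (d j * d l) = h i j * h i l := by
  obtain ⟨s₀₁, hs₀₁, h₀₁⟩ := exists_sign_col_mul_eq hg hh hsq (j := 0) (l := 1) (by decide)
  obtain ⟨s₀₂, hs₀₂, h₀₂⟩ := exists_sign_col_mul_eq hg hh hsq (j := 0) (l := 2) (by decide)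
  obtain ⟨s₁₂, hs₁₂, h₁₂⟩ := exists_sign_col_mul_eq hg hh hsq (j := 1) (l := 2) (by decide)
  -- with `d = ![1, s₀₁, s₀₂]` only the pair `(1, 2)` is in question
  have hsign₁₂ : (∀ i, g i 1 * g i 2 * (s₀₁ * s₀₂) = h i 1 * h i 2) ∨ ∀ i, g i 0 * g i 1 = 0 := by
    by_cases hfull : ∃ i, ∀ j, g i j ≠ 0
    · obtain ⟨i₀, hi₀⟩ := hfull
      have hh₀ : ∀ j, h i₀ j ≠ 0 := fun j => by
        simpa [← sq_eq_zero_iff (a := h i₀ j), ← hsq] using hi₀ j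
      have hne : h i₀ 0 ^ 2 * (h i₀ 1 * h i₀ 2) ≠ 0 :=
        mul_ne_zero (pow_ne_zero 2 (hh₀ 0)) (mul_ne_zero (hh₀ 1) (hh₀ 2))
      have hcons : s₀₁ * s₀₂ = s₁₂ := by
        refine mul_right_cancel₀ hne ?_
        linear_combination g i₀ 0 ^ 2 * h₁₂ i₀ + s₁₂ * h i₀ 1 * h i₀ 2 * hsq i₀ 0
          - g i₀ 0 * g i₀ 2 * h₀₁ i₀ - s₀₁ * h i₀ 0 * h i₀ 1 * h₀₂ i₀
      exact Or.inl fun i => by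
        linear_combination g i 1 * g i 2 * hcons + s₁₂ * h₁₂ i + h i 1 * h i 2 * hs₁₂
    · push Not at hfull
      refine (col_mul_eq_zero_of_forall_exists_eq_zero hg hfull).symm.imp (fun hz i => ?_) id
      linear_combination (s₀₁ * s₀₂ - s₁₂) * hz i + s₁₂ * h₁₂ i + h i 1 * h i 2 * hs₁₂
  rcases hsign₁₂ with h₁₂' | hz
  · refine ⟨![1, s₀₁, s₀₂], by simp [Fin.forall_fin_succ, hs₀₁, hs₀₂],
      mul_mul_mul_eq_of_pairs hsq (by simp [Fin.forall_fin_succ, hs₀₁, hs₀₂])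
        (fun i => ?_) (fun i => ?_) h₁₂'⟩ <;>
      simp only [cons_val_zero, cons_val_one, cons_val_two, tail_cons, head_cons]
    · linear_combination s₀₁ * h₀₁ i + h i 0 * h i 1 * hs₀₁
    · linear_combination s₀₂ * h₀₂ i + h i 0 * h i 2 * hs₀₂
  · refine ⟨![s₀₂, s₁₂, 1], by simp [Fin.forall_fin_succ, hs₀₂, hs₁₂],
      mul_mul_mul_eq_of_pairs hsq (by simp [Fin.forall_fin_succ, hs₀₂, hs₁₂])
        (fun i => ?_) (fun i => ?_) (fun i => ?_)⟩ <;>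
      simp only [cons_val_zero, cons_val_one, cons_val_two, tail_cons, head_cons]
    · linear_combination (s₀₂ * s₁₂ - s₀₁) * hz i + s₀₁ * h₀₁ i + h i 0 * h i 1 * hs₀₁
    · linear_combination s₀₂ * h₀₂ i + h i 0 * h i 2 * hs₀₂
    · linear_combination s₁₂ * h₁₂ i + h i 1 * h i 2 * hs₁₂

end SignPattern

lemma exists_diagonal_mul_mul_of_col_signs {m n K : Type*} [Fintype m] [DecidableEq m]
    [Fintype n] [DecidableEq n] [Field K] {g h : Matrix m n K} {d : n → K}
    (hd : ∀ j, d j * d j = 1) (hgh : ∀ i j l, g i j * g i l * (d j * d l) = h i j * h i l) :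
    ∃ c : m → K, (∀ i, c i * c i = 1) ∧ g = diagonal c * h * diagonal d := by
  choose c hc hrow using fun i => exists_sign_mul_of_mul_eq_mul (x := fun j => g i j * d j)
    (y := h i) fun j l => by linear_combination hgh i j l
  refine ⟨c, hc, ext fun i j => ?_⟩
  rw [mul_diagonal, diagonal_mul]
  linear_combination d j * hrow i j - g i j * hd j

theorem exists_diagonal_mul_mul_of_sq_eq {K : Type*} [Field K] {g h : Matrix (Fin 3) (Fin 3) K}
    (hg : g * gᵀ = 1) (hh : h * hᵀ = 1) (hsq : ∀ i j, g i j ^ 2 = h i j ^ 2) :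
    ∃ c d : Fin 3 → K, (∀ i, c i * c i = 1) ∧ (∀ j, d j * d j = 1) ∧
      g = diagonal c * h * diagonal d := by
  obtain ⟨d, hd, hgh⟩ := exists_col_signs hg hh hsq
  obtain ⟨c, hc, rfl⟩ := exists_diagonal_mul_mul_of_col_signs hd hgh
  exact ⟨c, d, hc, hd, rfl⟩

lemma exists_kleinGroup_eq_diagonal {c : Fin 3 → ℝ} (hc : ∀ i, c i * c i = 1)
    (hprod : c 0 * c 1 * c 2 = 1) : ∃ m, kleinGroup m = diagonal c := by
  have hc' : ∀ i, c i = 1 ∨ c i = -1 := fun i => mul_self_eq_one_iff.1 (hc i)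
  rcases hc' 0 with h0 | h0 <;> rcases hc' 1 with h1 | h1 <;> rcases hc' 2 with h2 | h2 <;>
    norm_num [h0, h1, h2] at hprod <;> [use 0; use 1; use 2; use 3] <;>
    · unfold kleinGroup
      congr 1
      funext j
      fin_cases j <;> simp [h0, h1, h2]

lemma exists_kleinGroup_mul_mul_of_eq_diagonal_mul_mul {g h : Matrix (Fin 3) (Fin 3) ℝ}
    (hgdet : g.det = 1) (hhdet : h.det = 1) {c d : Fin 3 → ℝ} (hc : ∀ i, c i * c i = 1)
    (hd : ∀ j, d j * d j = 1) (hgh : g = diagonal c * h * diagonal d) :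
    ∃ m m', g = kleinGroup m * h * kleinGroup m' := by
  set ε := c 0 * c 1 * c 2
  have hε : ε * ε = 1 := by
    linear_combination (c 1 * c 1 * c 2 * c 2) * hc 0 + c 2 * c 2 * hc 1 + hc 2
  have hdet : ε * (d 0 * d 1 * d 2) = 1 := by
    rw [hgh, det_mul, det_mul, det_diagonal, det_diagonal, hhdet, Fin.prod_univ_three,
      Fin.prod_univ_three] at hgdet
    linear_combination hgdet
  obtain ⟨m, hm⟩ := exists_kleinGroup_eq_diagonal (c := fun i => ε * c i)
    (fun i => by linear_combination c i * c i * hε + hc i)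
    (by linear_combination (ε * ε + 1) * hε)
  obtain ⟨m', hm'⟩ := exists_kleinGroup_eq_diagonal (c := fun j => ε * d j)
    (fun j => by linear_combination d j * d j * hε + hd j)
    (by linear_combination ε * ε * hdet + hε)
  refine ⟨m, m', ?_⟩
  rw [hm, hm', hgh]
  ext i j
  simp only [mul_diagonal, diagonal_mul]
  linear_combination - c i * h i j * d j * hε

theorem exists_kleinGroup_mul_mul_of_abs_eq {g h : Matrix (Fin 3) (Fin 3) ℝ}
    (hg : g * gᵀ = 1) (hgdet : g.det = 1) (hh : h * hᵀ = 1) (hhdet : h.det = 1)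
    (habs : ∀ i j, |g i j| = |h i j|) : ∃ c d : Fin 4, g = kleinGroup c * h * kleinGroup d := by
  obtain ⟨c, d, hc, hd, hgh⟩ := exists_diagonal_mul_mul_of_sq_eq hg hh
    fun i j => (sq_eq_sq_iff_abs_eq_abs _ _).2 (habs i j)
  exact exists_kleinGroup_mul_mul_of_eq_diagonal_mul_mul hgdet hhdet hc hd hgh

theorem stmt10_general (g h : Matrix (Fin 3) (Fin 3) ℝ)
    (hg : g * gᵀ = 1) (hgdet : g.det = 1) (hh : h * hᵀ = 1) (hhdet : h.det = 1)
    (n : ℕ) (hn : 0 < n) (ρ : Fin 3 → Fin 3 → Matrix (Fin n) (Fin n) ℂ)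
    (Wg Wh : Matrix (Fin 2 × Fin 2) (Fin n) ℂ)
    (hWg : Wgᴴ * Wg = 1) (hWh : Whᴴ * Wh = 1)
    (hintg : ∀ i j, piRep g i j * Wg = Wg * ρ i j)
    (hinth : ∀ i j, piRep h i j * Wh = Wh * ρ i j) :
    (∀ i j, |g i j| = |h i j|) ∧
    ∃ c d : Fin 4, g = kleinGroup c * h * kleinGroup d := by
  have : Nonempty (Fin n) := ⟨⟨0, hn⟩⟩
  have habs : ∀ i j, |g i j| = |h i j| := fun i j => (sq_eq_sq_iff_abs_eq_abs _ _).1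
    (sq_eq_sq_of_common_subrep hWg hWh hintg hinth i j)
  exact ⟨habs, exists_kleinGroup_mul_mul_of_abs_eq hg hgdet hh hhdet habs⟩

/-- if `g, h ∈ SO(3)` are such that `π_g` and `π_h` admit a common irreducible
subrepresentation `ρ` (realised on `ℂⁿ`, `n > 0`, via isometries `W_g, W_h` intertwining `ρ`
with `π_g` resp. `π_h`), then `|g_{ij}| = |h_{ij}|` for all `i, j`, and consequently
`g = c h d` for some `c, d` in the Klein group `D`. -/
theorem stmt10 (g h : Matrix (Fin 3) (Fin 3) ℝ)
    (hg : g * gᵀ = 1) (hgdet : g.det = 1) (hh : h * hᵀ = 1) (hhdet : h.det = 1)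
    (n : ℕ) (hn : 0 < n) (ρ : Fin 3 → Fin 3 → Matrix (Fin n) (Fin n) ℂ)
    (hirr : ∀ T : Matrix (Fin n) (Fin n) ℂ,
      (∀ i j, T * ρ i j = ρ i j * T) → ∃ c : ℂ, T = c • 1)
    (Wg Wh : Matrix (Fin 2 × Fin 2) (Fin n) ℂ)
    (hWg : Wgᴴ * Wg = 1) (hWh : Whᴴ * Wh = 1)
    (hintg : ∀ i j, piRep g i j * Wg = Wg * ρ i j)
    (hinth : ∀ i j, piRep h i j * Wh = Wh * ρ i j) :
    (∀ i j, |g i j| = |h i j|) ∧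
    ∃ c d : Fin 4, g = kleinGroup c * h * kleinGroup d :=
  stmt10_general g h hg hgdet hh hhdet n hn ρ Wg Wh hWg hWh hintg hinth
end
end

section
/- Let X = (V, E) be a graph and (H, u) a quantum automorphism of X. If x₁, x₂, y₁, y₂ ∈ V satisfy d(x₁, x₂) ≠ d(y₁, y₂) (graph distances, possibly infinite), then u_{x₁ y₁} u_{x₂ y₂} = 0. -/
noncomputable section

def IsProjection {H : Type*} [NormedAddCommGroup H] [InnerProductSpace ℂ H] [CompleteSpace H]
    (p : H →L[ℂ] H) : Prop :=
  IsIdempotentElem p ∧ IsSelfAdjoint p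

def IsQuantumPermutation {X H : Type*} [NormedAddCommGroup H] [InnerProductSpace ℂ H]
    [CompleteSpace H] (u : X → X → H →L[ℂ] H) : Prop :=
  (∀ x y, IsProjection (u x y)) ∧
  (∀ x z z', z ≠ z' → u x z * u x z' = 0) ∧
  (∀ y z z', z ≠ z' → u z y * u z' y = 0) ∧
  (∀ x (ξ : H), HasSum (fun z => u x z ξ) ξ) ∧
  (∀ y (ξ : H), HasSum (fun z => u z y ξ) ξ)

/-- A quantum automorphism of a graph `G`: a quantum permutation of its vertex set with
`u_{x₁y₁} u_{x₂y₂} = 0` whenever `rel(x₁,x₂) ≠ rel(y₁,y₂)`, where `rel` distinguishes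
'equal', 'adjacent' and 'distinct non-adjacent'. -/
def IsQuantumAut {V H : Type*} [NormedAddCommGroup H] [InnerProductSpace ℂ H]
    [CompleteSpace H] (G : SimpleGraph V) (u : V → V → H →L[ℂ] H) : Prop :=
  IsQuantumPermutation u ∧
  ∀ x₁ x₂ y₁ y₂, ¬((x₁ = x₂ ↔ y₁ = y₂) ∧ (G.Adj x₁ x₂ ↔ G.Adj y₁ y₂)) →
    u x₁ y₁ * u x₂ y₂ = 0

/-! It suffices to treat `d(x₁,x₂) = n < d(y₁,y₂)`, by strong induction on `n` simultaneously for
`u` and its transpose (which swaps the roles of the `x`s and the `y`s). For `n = 0` this is the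
defining relation. For `n + 1`, pick `x` adjacent to `x₂` with `d(x₁,x) = n` and insert the
partition of unity `∑_y u_{xy}` between the two factors: `u_{x₁y₁} u_{xy} = 0` by induction
whenever `d(y₁,y) ≠ n`, and if `d(y₁,y) = n` then `d(y,y₂) ≥ 2` while `x ~ x₂`, so
`u_{xy} u_{x₂y₂} = 0`. -/

namespace SimpleGraph

variable {V : Type*} {G : SimpleGraph V} {u v w : V}

lemma edist_le_edist_add_one_of_adj (h : G.Adj v w) : G.edist u w ≤ G.edist u v + 1 :=
  G.edist_triangle.trans_eq (by rw [edist_eq_one_iff_adj.mpr h])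

lemma exists_adj_edist_eq_of_edist_eq_succ {n : ℕ} (h : G.edist u w = (n + 1 : ℕ)) :
    ∃ v, G.Adj v w ∧ G.edist u v = n := by
  rw [edist_comm] at h
  obtain ⟨p, hp⟩ := exists_walk_of_edist_eq_coe h
  cases p with
  | nil => simp at hp
  | @cons _ v _ hadj q =>
    rw [Walk.length_cons, Nat.add_right_cancel_iff] at hp
    refine ⟨v, hadj.symm, le_antisymm ?_ ?_⟩
    · exact (G.edist_le q.reverse).trans_eq (by rw [Walk.length_reverse, hp])
    · have := edist_le_edist_add_one_of_adj (u := u) hadj.symm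
      rw [edist_comm, h, Nat.cast_add_one] at this
      exact (ENat.add_le_add_iff_right ENat.one_ne_top).mp this

end SimpleGraph

namespace ContinuousLinearMap

variable {ι R M : Type*} [Semiring R] [AddCommMonoid M] [Module R M] [TopologicalSpace M]
  [T2Space M]

lemma mul_eq_zero_of_hasSum_apply {p : ι → M →L[R] M} (hp : ∀ ξ, HasSum (fun i => p i ξ) ξ)
    {a b : M →L[R] M} (h : ∀ i, a * p i = 0 ∨ p i * b = 0) : a * b = 0 := by
  ext ξ
  have hsum : HasSum (fun i => a (p i (b ξ))) (a (b ξ)) := a.hasSum (hp (b ξ))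
  have hzero : ∀ i, a (p i (b ξ)) = 0 := fun i => by
    rcases h i with h | h
    · exact congr($h (b ξ))
    · rw [show p i (b ξ) = 0 from congr($h ξ), map_zero]
  simp only [hzero] at hsum
  exact hsum.unique hasSum_zero

end ContinuousLinearMap

namespace IsQuantumAut

variable {V H : Type*} [NormedAddCommGroup H] [InnerProductSpace ℂ H] [CompleteSpace H]
  {G : SimpleGraph V} {u : V → V → H →L[ℂ] H}

lemma transpose (hu : IsQuantumAut G u) : IsQuantumAut G (fun x y => u y x) := by
  obtain ⟨⟨hproj, hrow, hcol, hrowSum, hcolSum⟩, hrel⟩ := hu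
  exact ⟨⟨fun x y => hproj y x, hcol, hrow, hcolSum, hrowSum⟩,
    fun x₁ x₂ y₁ y₂ h => hrel y₁ y₂ x₁ x₂ fun ⟨h₁, h₂⟩ => h ⟨h₁.symm, h₂.symm⟩⟩

lemma mul_eq_zero_of_adj_of_one_lt_edist (hu : IsQuantumAut G u) {x₁ x₂ y₁ y₂ : V}
    (hx : G.Adj x₁ x₂) (hy : 1 < G.edist y₁ y₂) : u x₁ y₁ * u x₂ y₂ = 0 := by
  have : ¬(G.Adj y₁ y₂ ∨ y₁ = y₂) := by rwa [← SimpleGraph.edist_le_one_iff_adj_or_eq, not_le]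
  exact hu.2 x₁ x₂ y₁ y₂ (by tauto)

theorem mul_eq_zero_of_edist_lt (hu : IsQuantumAut G u) {x₁ x₂ y₁ y₂ : V}
    (h : G.edist x₁ x₂ < G.edist y₁ y₂) : u x₁ y₁ * u x₂ y₂ = 0 := by
  obtain ⟨n, hn⟩ := ENat.ne_top_iff_exists.mp h.ne_top
  induction n using Nat.strong_induction_on generalizing u x₁ x₂ y₁ y₂ with | _ n ih => ?_
  rw [← hn] at h
  cases n with
  | zero =>
    have hx : x₁ = x₂ := G.edist_eq_zero_iff.mp (by simpa using hn.symm)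
    have hy : y₁ ≠ y₂ := by rintro rfl; simp at h
    exact hu.2 x₁ x₂ y₁ y₂ (by tauto)
  | succ n =>
    obtain ⟨x, hxx₂, hx₁x⟩ := SimpleGraph.exists_adj_edist_eq_of_edist_eq_succ hn.symm
    refine ContinuousLinearMap.mul_eq_zero_of_hasSum_apply (hu.1.2.2.2.1 x) fun y => ?_
    rcases lt_trichotomy (G.edist y₁ y) n with hlt | heq | hgt
    · obtain ⟨k, hk⟩ := ENat.ne_top_iff_exists.mp (hlt.trans (ENat.natCast_lt_top n)).ne_top
      have hkn : k < n := by exact_mod_cast hk ▸ hlt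
      exact .inl (ih k (by omega) hu.transpose (hx₁x ▸ hlt) hk)
    · refine .inr (hu.mul_eq_zero_of_adj_of_one_lt_edist hxx₂ (not_le.mp fun hle => h.not_ge ?_))
      calc G.edist y₁ y₂ ≤ G.edist y₁ y + G.edist y y₂ := G.edist_triangle
        _ ≤ n + 1 := by rw [heq]; gcongr
        _ = (n + 1 : ℕ) := by push_cast; rfl
    · exact .inl (ih n (Nat.lt_succ_self n) hu (hx₁x ▸ hgt) hx₁x.symm)

end IsQuantumAut

/-- a quantum automorphism kills products of entries associated to pairs of
vertices at different (possibly infinite) distances. -/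
theorem stmt11 {V H : Type*} [NormedAddCommGroup H] [InnerProductSpace ℂ H] [CompleteSpace H]
    (G : SimpleGraph V) (u : V → V → H →L[ℂ] H) (hu : IsQuantumAut G u)
    (x₁ x₂ y₁ y₂ : V) (hd : G.edist x₁ x₂ ≠ G.edist y₁ y₂) :
    u x₁ y₁ * u x₂ y₂ = 0 :=
  hd.lt_or_gt.elim hu.mul_eq_zero_of_edist_lt hu.transpose.mul_eq_zero_of_edist_lt
end
end

section
/- Let L be the 'infinite line' graph with vertex set Z and edges between i and j iff |i − j| = 1, and let (H, u) be a quantum automorphism of L. Then, with p_α(±) := u_{x(±), y₁(±)} type projections as in the inductive scheme, the base case holds: u_{0,0} commutes with u_{1,1}, u_{1,−1}, u_{−1,1}, and u_{−1,−1}. More precisely, from the relations u_{i,j+1} + u_{i,j−1} = u_{i+1,j} + u_{i−1,j} and the magic-unitary orthogonality relations one derives u_{1,1} ⊕ u_{1,−1} = (u_{0,0} ∧ u_{1,1}) ⊕ (u_{0,0} ∧ u_{1,−1}) ⊕ (u_{2,0} ∧ u_{1,1}) ⊕ (u_{2,0} ∧ u_{1,−1}), and in particular u_{0,0} u_{1,1}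 = u_{1,1} u_{0,0}. -/
/-!
Fix `i ~ k` and `j ~ l` in the line graph, and put `p = u i j`, `a = u k l`. Multiplying by the
column partitions of unity `∑ z, u z j = 1`, `∑ z, u z l = 1` and discarding the products killed
by the graph relations gives `a = a p + a q` and `p = p a + p r` with `q = u (2k-i) j` and
`r = u (2i-k) l`. Now `p q = 0` (same column) and `r q = 0` (rows at distance 3, columns
adjacent), so `p a q = 0` and hence `p a = p a p`. The right-hand side is self-adjoint, so
`p a = a p`. Once `u 0 0` and `u 2 0` commute with `u 1 (±1)`, the meets are the products, and
`u 1 (±1) = u 1 (±1) (u 0 0 + u 2 0)` is the claimed decomposition.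
-/

noncomputable section

/-- The 'infinite line' graph `L`: vertex set `ℤ`, edges between `i` and `j` iff `|i−j| = 1`. -/
def lineGraph : SimpleGraph ℤ where
  Adj i j := |i - j| = 1
  symm := ⟨fun i j h => by simpa [abs_sub_comm] using h⟩
  loopless := ⟨fun i h => by simp at h⟩

/-- `m` is the projection `p ∧ q` onto the intersection of the ranges of the projections
`p` and `q`. -/
def IsMeetProj {H : Type*} [NormedAddCommGroup H] [InnerProductSpace ℂ H] [CompleteSpace H]
    (p q m : H →L[ℂ] H) : Prop :=
  IsProjection m ∧ LinearMap.range (m : H →ₗ[ℂ] H) = LinearMap.range (p : H →ₗ[ℂ] H) ⊓ LinearMap.range (q : H →ₗ[ℂ] H)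

theorem LinearMap.range_mul_of_commute {R M : Type*} [Semiring R] [AddCommMonoid M] [Module R M]
    {f g : M →ₗ[R] M} (hf : IsIdempotentElem f) (hg : IsIdempotentElem g) (hfg : Commute f g) :
    LinearMap.range (f * g) = LinearMap.range f ⊓ LinearMap.range g := by
  ext x
  simp only [Submodule.mem_inf, IsIdempotentElem.mem_range_iff (hf.mul_of_commute hfg hg),
    IsIdempotentElem.mem_range_iff hf, IsIdempotentElem.mem_range_iff hg, Module.End.mul_apply]
  constructor
  · intro hx
    refine ⟨by rw [← hx, ← Module.End.mul_apply f, hf.eq], ?_⟩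
    calc g x = g (f (g x)) := by rw [hx]
      _ = f (g (g x)) := by rw [← Module.End.mul_apply g f, ← hfg.eq, Module.End.mul_apply]
      _ = x := by rw [← Module.End.mul_apply g g, hg.eq, hx]
  · rintro ⟨hfx, hgx⟩
    rw [hgx, hfx]

theorem commute_of_eq_mul_add_mul {R : Type*} [Ring R] [StarRing R] {p a q r : R}
    (hp : IsSelfAdjoint p) (ha : IsSelfAdjoint a) (hap : a = a * p + a * q)
    (hpa : p = p * a + p * r) (hpq : p * q = 0) (hrq : r * q = 0) : Commute p a := by
  have hpaq : p * a * q = 0 := by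
    rw [eq_sub_of_add_eq hpa.symm, sub_mul, hpq, mul_assoc, hrq, mul_zero, sub_zero]
  have hpap : p * a = p * a * p := by
    conv_lhs => rw [hap]
    rw [mul_add, ← mul_assoc, ← mul_assoc, hpaq, add_zero]
  have hapa : a * p = p * a * p := by
    simpa only [star_mul, hp.star_eq, ha.star_eq, mul_assoc] using congr(star $hpap)
  exact hpap.trans hapa.symm

section

variable {H : Type*} [NormedAddCommGroup H] [InnerProductSpace ℂ H] [CompleteSpace H]

theorem IsProjection.isStarProjection {p : H →L[ℂ] H} (hp : IsProjection p) :
    IsStarProjection p :=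
  ⟨hp.1, hp.2⟩

theorem IsMeetProj.eq_mul_of_commute {p q m : H →L[ℂ] H} (hp : IsProjection p)
    (hq : IsProjection q) (hpq : Commute p q) (hm : IsMeetProj p q m) : m = p * q := by
  refine ContinuousLinearMap.IsStarProjection.ext hm.1.isStarProjection
    (hp.isStarProjection.mul hq.isStarProjection hpq) ?_
  rw [hm.2, ContinuousLinearMap.toLinearMap_mul, LinearMap.range_mul_of_commute
    (ContinuousLinearMap.IsIdempotentElem.toLinearMap hp.1)
    (ContinuousLinearMap.IsIdempotentElem.toLinearMap hq.1)
    (hpq.map ContinuousLinearMap.toLinearMapRingHom)]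

end

theorem lineGraph_adj_iff {i j : ℤ} : lineGraph.Adj i j ↔ i = j + 1 ∨ j = i + 1 := by
  change |i - j| = 1 ↔ _
  rw [abs_eq zero_le_one]
  omega

namespace IsQuantumAut

variable {H : Type*} [NormedAddCommGroup H] [InnerProductSpace ℂ H] [CompleteSpace H]
  {u : ℤ → ℤ → H →L[ℂ] H}

theorem lineGraph_mul_eq_zero (hu : IsQuantumAut lineGraph u) {x₁ x₂ y₁ y₂ : ℤ}
    (h : ¬((x₁ = x₂ ↔ y₁ = y₂) ∧
      ((x₁ = x₂ + 1 ∨ x₂ = x₁ + 1) ↔ (y₁ = y₂ + 1 ∨ y₂ = y₁ + 1)))) :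
    u x₁ y₁ * u x₂ y₂ = 0 :=
  hu.2 x₁ x₂ y₁ y₂ (by simpa only [lineGraph_adj_iff] using h)

theorem eq_mul_add_mul_of_adj (hu : IsQuantumAut lineGraph u) {i j x y : ℤ}
    (hix : lineGraph.Adj i x) (hjy : lineGraph.Adj j y) :
    u i j = u i j * u x y + u i j * u (2 * i - x) y := by
  rw [lineGraph_adj_iff] at hix hjy
  ext ξ
  have hsum : HasSum (fun z => u i j (u z y ξ)) (u i j ξ) := (hu.1.2.2.2.2 y ξ).mapL (u i j)
  have hpair : HasSum (fun z => u i j (u z y ξ)) (∑ z ∈ {x, 2 * i - x}, u i j (u z y ξ)) := by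
    refine hasSum_sum_of_ne_finset_zero fun z hz => ?_
    simp only [Finset.mem_insert, Finset.mem_singleton, not_or] at hz
    rw [← mul_apply_eq_comp, hu.lineGraph_mul_eq_zero (by omega), zero_apply]
  rw [hsum.unique hpair, Finset.sum_pair (by omega)]
  rfl

theorem commute_of_adj (hu : IsQuantumAut lineGraph u) {i j k l : ℤ} (hik : lineGraph.Adj i k)
    (hjl : lineGraph.Adj j l) : Commute (u i j) (u k l) := by
  have hik' := lineGraph_adj_iff.1 hik
  have hjl' := lineGraph_adj_iff.1 hjl
  exact commute_of_eq_mul_add_mul (hu.1.1 i j).2 (hu.1.1 k l).2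
    (hu.eq_mul_add_mul_of_adj hik.symm hjl.symm) (hu.eq_mul_add_mul_of_adj hik hjl)
    (hu.lineGraph_mul_eq_zero (by omega)) (hu.lineGraph_mul_eq_zero (by omega))

end IsQuantumAut

/-- base case of the inductive commutation argument for the infinite line
graph: for any quantum automorphism `(H, u)` of `L`, one has the orthogonal decomposition
`u_{1,1} + u_{1,−1} = (u_{0,0} ∧ u_{1,1}) + (u_{0,0} ∧ u_{1,−1}) + (u_{2,0} ∧ u_{1,1}) +
(u_{2,0} ∧ u_{1,−1})`, and in particular `u_{0,0}` commutes with `u_{1,1}`, `u_{1,−1}`,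
`u_{−1,1}` and `u_{−1,−1}`. -/
theorem stmt12 {H : Type*} [NormedAddCommGroup H] [InnerProductSpace ℂ H] [CompleteSpace H]
    (u : ℤ → ℤ → H →L[ℂ] H) (hu : IsQuantumAut lineGraph u) :
    Commute (u 0 0) (u 1 1) ∧ Commute (u 0 0) (u 1 (-1)) ∧
    Commute (u 0 0) (u (-1) 1) ∧ Commute (u 0 0) (u (-1) (-1)) ∧
    (∀ m₁ m₂ m₃ m₄ : H →L[ℂ] H,
      IsMeetProj (u 0 0) (u 1 1) m₁ → IsMeetProj (u 0 0) (u 1 (-1)) m₂ →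
      IsMeetProj (u 2 0) (u 1 1) m₃ → IsMeetProj (u 2 0) (u 1 (-1)) m₄ →
      u 1 1 + u 1 (-1) = m₁ + m₂ + m₃ + m₄) := by
  have adj : ∀ i j : ℤ, i = j + 1 ∨ j = i + 1 → lineGraph.Adj i j :=
    fun _ _ => lineGraph_adj_iff.2
  have c₁ := hu.commute_of_adj (adj 0 1 (by omega)) (adj 0 1 (by omega))
  have c₂ := hu.commute_of_adj (adj 0 1 (by omega)) (adj 0 (-1) (by omega))
  have c₃ := hu.commute_of_adj (adj 2 1 (by omega)) (adj 0 1 (by omega))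
  have c₄ := hu.commute_of_adj (adj 2 1 (by omega)) (adj 0 (-1) (by omega))
  refine ⟨c₁, c₂, hu.commute_of_adj (adj 0 (-1) (by omega)) (adj 0 1 (by omega)),
    hu.commute_of_adj (adj 0 (-1) (by omega)) (adj 0 (-1) (by omega)), ?_⟩
  intro m₁ m₂ m₃ m₄ hm₁ hm₂ hm₃ hm₄
  have d₁ := hu.eq_mul_add_mul_of_adj (adj 1 0 (by omega)) (adj 1 0 (by omega))
  have d₂ := hu.eq_mul_add_mul_of_adj (adj 1 0 (by omega)) (adj (-1) 0 (by omega))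
  rw [hm₁.eq_mul_of_commute (hu.1.1 0 0) (hu.1.1 1 1) c₁,
    hm₂.eq_mul_of_commute (hu.1.1 0 0) (hu.1.1 1 (-1)) c₂,
    hm₃.eq_mul_of_commute (hu.1.1 2 0) (hu.1.1 1 1) c₃,
    hm₄.eq_mul_of_commute (hu.1.1 2 0) (hu.1.1 1 (-1)) c₄, c₁.eq, c₂.eq, c₃.eq, c₄.eq]
  norm_num at d₁ d₂
  conv_lhs => rw [d₁, d₂]
  abel
end
end

section
/- Let X, Y be graphs and let u^X, u^Y be quantum automorphisms of X and Y respectively on the same Hilbert space H such that u^X_{x₁x₂} u^Y_{y₁y₂} = u^Y_{y₁y₂} u^X_{x₁x₂} for all vertices. Define w_{(x₁,y₁),(x₂,y₂)} = u^X_{x₁x₂} u^Y_{y₁y₂}. Then (H, w) is a quantum automorphism of the direct product graph X × Y: each w entry is a projection, rows and columns form partitions of unity, and w commutes with the adjacency matrix A_X ⊗ A_Y. -/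
noncomputable section

/-- The direct (tensor/Kronecker) product `X × Y` of graphs: `(x₁,y₁)` and `(x₂,y₂)` are
adjacent iff `x₁ ∼ x₂` and `y₁ ∼ y₂`; its adjacency matrix is `A_X ⊗ A_Y`. -/
def directProd {V W : Type*} (G : SimpleGraph V) (G' : SimpleGraph W) :
    SimpleGraph (V × W) where
  Adj a b := G.Adj a.1 b.1 ∧ G'.Adj a.2 b.2
  symm := ⟨fun a b h => ⟨h.1.symm, h.2.symm⟩⟩
  loopless := ⟨fun a h => G.loopless.irrefl a.1 h.1⟩

/-!
Since the entries of `u` and `v` commute, `w_{ab} = u_{a₁b₁} v_{a₂b₂}` is a projection and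
`w_{ab} w_{a'b'} = (u_{a₁b₁} u_{a'₁b'₁}) (v_{a₂b₂} v_{a'₂b'₂})`, which vanishes as soon as one factor
does. This gives the orthogonality of rows and columns, and the compatibility with adjacency,
because the relation between two vertices of `X × Y` is determined by the relations of their
coordinates. For the row sums, the vectors `w_{az} ξ` are pairwise orthogonal and
`∑_{z ∈ s} ‖w_{az} ξ‖² = ‖(∑_{z ∈ s} w_{az}) ξ‖² ≤ ‖ξ‖²`, so the row is summable in `H`; summing
first over the second coordinate identifies the sum as `∑_x u_{a₁x} ξ = ξ`.
-/

open scoped InnerProductSpace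

theorem IsStarProjection.finsetSum {R ι : Type*} [NonUnitalNonAssocSemiring R] [StarRing R]
    {p : ι → R} (hp : ∀ i, IsStarProjection (p i)) (horth : Pairwise fun i j => p i * p j = 0)
    (s : Finset ι) : IsStarProjection (∑ i ∈ s, p i) := by
  classical
  induction s using Finset.induction with
  | empty => simp [IsStarProjection.zero]
  | @insert j s hj ih =>
    rw [Finset.sum_insert hj]
    refine (hp j).add ih ?_
    rw [Finset.mul_sum]
    exact Finset.sum_eq_zero fun i hi => horth (ne_of_mem_of_not_mem hi hj).symm

theorem mul_mul_mul_eq_zero_of_ne {R ι κ : Type*} [Semiring R] {p : ι → R} {q : κ → R}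
    (hp : Pairwise fun i j => p i * p j = 0) (hq : Pairwise fun i j => q i * q j = 0)
    (hpq : ∀ i j, Commute (p i) (q j)) {z z' : ι × κ} (h : z ≠ z') :
    p z.1 * q z.2 * (p z'.1 * q z'.2) = 0 := by
  rw [(hpq z'.1 z.2).symm.mul_mul_mul_comm]
  rcases eq_or_ne z.1 z'.1 with h₁ | h₁
  · rw [hq fun h₂ => h (Prod.ext h₁ h₂), mul_zero]
  · rw [hp h₁, zero_mul]

section HilbertSpace

variable {H : Type*} [NormedAddCommGroup H] [InnerProductSpace ℂ H] [CompleteSpace H]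

theorem isProjection_iff_isStarProjection {p : H →L[ℂ] H} :
    IsProjection p ↔ IsStarProjection p :=
  (isStarProjection_iff p).symm

theorem IsStarProjection.norm_apply_le {p : H →L[ℂ] H} (hp : IsStarProjection p) (ξ : H) :
    ‖p ξ‖ ≤ ‖ξ‖ :=
  p.le_of_opNorm_le (hp.norm_le p) ξ |>.trans_eq (one_mul _)

variable {ι : Type*} {p : ι → H →L[ℂ] H}

theorem orthogonalFamily_range_of_isStarProjection (hp : ∀ i, IsStarProjection (p i))
    (horth : Pairwise fun i j => p i * p j = 0) :
    OrthogonalFamily ℂ (fun i => LinearMap.range (p i : H →ₗ[ℂ] H))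
      fun i => (LinearMap.range (p i : H →ₗ[ℂ] H)).subtypeₗᵢ := by
  rintro i j hij ⟨_, a, rfl⟩ ⟨_, b, rfl⟩
  change ⟪p i a, p j b⟫_ℂ = 0
  rw [← ContinuousLinearMap.adjoint_inner_right, ← ContinuousLinearMap.star_eq_adjoint,
    (hp i).isSelfAdjoint.star_eq]
  change ⟪a, (p i * p j) b⟫_ℂ = 0
  rw [horth hij, zero_apply, inner_zero_right]

theorem summable_apply_of_isStarProjection (hp : ∀ i, IsStarProjection (p i))
    (horth : Pairwise fun i j => p i * p j = 0) (ξ : H) :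
    Summable fun i => p i ξ := by
  have hV := orthogonalFamily_range_of_isStarProjection hp horth
  let f : ∀ i, LinearMap.range (p i : H →ₗ[ℂ] H) := fun i =>
    ⟨p i ξ, LinearMap.mem_range_self _ ξ⟩
  have hbound (s : Finset ι) : ∑ i ∈ s, ‖f i‖ ^ 2 ≤ ‖ξ‖ ^ 2 := by
    rw [← hV.norm_sum f s]
    gcongr
    refine (le_of_eq ?_).trans ((IsStarProjection.finsetSum hp horth s).norm_apply_le ξ)
    rw [sum_apply]
    rfl
  exact (hV.summable_iff_norm_sq_summable f).2 <|
    summable_of_sum_le (fun i => sq_nonneg _) hbound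

theorem hasSum_mul_apply_of_isStarProjection {κ : Type*} {q : κ → H →L[ℂ] H}
    (hp : ∀ i, IsStarProjection (p i)) (hq : ∀ j, IsStarProjection (q j))
    (hpo : Pairwise fun i i' => p i * p i' = 0) (hqo : Pairwise fun j j' => q j * q j' = 0)
    (hpq : ∀ i j, Commute (p i) (q j)) {ξ : H}
    (hps : HasSum (fun i => p i ξ) ξ) (hqs : HasSum (fun j => q j ξ) ξ) :
    HasSum (fun z : ι × κ => (p z.1 * q z.2) ξ) ξ := by
  have hr (z : ι × κ) : IsStarProjection (p z.1 * q z.2) := (hp z.1).mul (hq z.2) (hpq z.1 z.2)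
  have hro : Pairwise fun z z' : ι × κ => p z.1 * q z.2 * (p z'.1 * q z'.2) = 0 :=
    fun _ _ h => mul_mul_mul_eq_zero_of_ne hpo hqo hpq h
  obtain ⟨a, ha⟩ := summable_apply_of_isStarProjection hr hro ξ
  have hfiber (i : ι) : HasSum (fun j => (p i * q j) ξ) (p i ξ) := (p i).hasSum hqs
  rwa [(ha.prod_fiberwise hfiber).unique hps] at ha

end HilbertSpace

theorem IsQuantumPermutation.prod {X Y H : Type*} [NormedAddCommGroup H]
    [InnerProductSpace ℂ H] [CompleteSpace H] {u : X → X → H →L[ℂ] H} {v : Y → Y → H →L[ℂ] H}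
    (hu : IsQuantumPermutation u) (hv : IsQuantumPermutation v)
    (hcomm : ∀ x₁ x₂ y₁ y₂, Commute (u x₁ x₂) (v y₁ y₂)) :
    IsQuantumPermutation fun a b : X × Y => u a.1 b.1 * v a.2 b.2 := by
  obtain ⟨hup, hur, huc, hurs, hucs⟩ := hu
  obtain ⟨hvp, hvr, hvc, hvrs, hvcs⟩ := hv
  simp only [isProjection_iff_isStarProjection] at hup hvp
  refine ⟨fun a b => isProjection_iff_isStarProjection.2 <|
      (hup a.1 b.1).mul (hvp a.2 b.2) (hcomm _ _ _ _), fun a _ _ h => ?_,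
    fun b _ _ h => ?_, fun a ξ => ?_, fun b ξ => ?_⟩
  · exact mul_mul_mul_eq_zero_of_ne (hur a.1) (hvr a.2) (fun _ _ => hcomm _ _ _ _) h
  · exact mul_mul_mul_eq_zero_of_ne (huc b.1) (hvc b.2) (fun _ _ => hcomm _ _ _ _) h
  · exact hasSum_mul_apply_of_isStarProjection (hup a.1) (hvp a.2) (hur a.1) (hvr a.2)
      (fun _ _ => hcomm _ _ _ _) (hurs a.1 ξ) (hvrs a.2 ξ)
  · exact hasSum_mul_apply_of_isStarProjection (hup · b.1) (hvp · b.2) (huc b.1) (hvc b.2)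
      (fun _ _ => hcomm _ _ _ _) (hucs b.1 ξ) (hvcs b.2 ξ)

theorem directProd_rel_iff_of_rel_iff {V W : Type*} {G : SimpleGraph V} {G' : SimpleGraph W}
    {a₁ a₂ b₁ b₂ : V × W}
    (h₁ : (a₁.1 = a₂.1 ↔ b₁.1 = b₂.1) ∧ (G.Adj a₁.1 a₂.1 ↔ G.Adj b₁.1 b₂.1))
    (h₂ : (a₁.2 = a₂.2 ↔ b₁.2 = b₂.2) ∧ (G'.Adj a₁.2 a₂.2 ↔ G'.Adj b₁.2 b₂.2)) :
    (a₁ = a₂ ↔ b₁ = b₂) ∧ ((directProd G G').Adj a₁ a₂ ↔ (directProd G G').Adj b₁ b₂) := by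
  simp only [Prod.ext_iff, directProd, h₁.1, h₂.1, h₁.2, h₂.2, and_self]

theorem IsQuantumAut.prod {V W H : Type*} [NormedAddCommGroup H] [InnerProductSpace ℂ H]
    [CompleteSpace H] {G : SimpleGraph V} {G' : SimpleGraph W}
    {u : V → V → H →L[ℂ] H} {v : W → W → H →L[ℂ] H}
    (hu : IsQuantumAut G u) (hv : IsQuantumAut G' v)
    (hcomm : ∀ x₁ x₂ y₁ y₂, Commute (u x₁ x₂) (v y₁ y₂)) :
    IsQuantumAut (directProd G G') fun a b : V × W => u a.1 b.1 * v a.2 b.2 := by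
  refine ⟨hu.1.prod hv.1 hcomm, fun a₁ a₂ b₁ b₂ hrel => ?_⟩
  rw [(hcomm a₂.1 b₂.1 a₁.2 b₁.2).symm.mul_mul_mul_comm]
  by_cases h₁ : (a₁.1 = a₂.1 ↔ b₁.1 = b₂.1) ∧ (G.Adj a₁.1 a₂.1 ↔ G.Adj b₁.1 b₂.1)
  · by_cases h₂ : (a₁.2 = a₂.2 ↔ b₁.2 = b₂.2) ∧ (G'.Adj a₁.2 a₂.2 ↔ G'.Adj b₁.2 b₂.2)
    · exact absurd (directProd_rel_iff_of_rel_iff h₁ h₂) hrel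
    · rw [hv.2 _ _ _ _ h₂, mul_zero]
  · rw [hu.2 _ _ _ _ h₁, zero_mul]

/-- if `u, v` are quantum automorphisms of `X`, `Y` on the same Hilbert space,
with pointwise commuting entries, then `w_{(x₁,y₁),(x₂,y₂)} = u_{x₁x₂} v_{y₁y₂}` is a quantum
automorphism of the direct product `X × Y`. -/
theorem stmt14 {V W H : Type*} [NormedAddCommGroup H] [InnerProductSpace ℂ H] [CompleteSpace H]
    (G : SimpleGraph V) (G' : SimpleGraph W)
    (u : V → V → H →L[ℂ] H) (v : W → W → H →L[ℂ] H)
    (hu : IsQuantumAut G u) (hv : IsQuantumAut G' v)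
    (hcomm : ∀ x₁ x₂ y₁ y₂, Commute (u x₁ x₂) (v y₁ y₂)) :
    IsQuantumAut (directProd G G')
      (fun a b : V × W => u a.1 b.1 * v a.2 b.2) :=
  hu.prod hv hcomm
end
end
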